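/- arXiv:2212.07106 — 3 statements merged into one kernel-verified Lean document; each statement's English description precedes it below -/
import Mathlib

section
/- Let A be the adjacency matrix of a strongly regular graph with parameters (q^{2ν}, (q^ν-1)(q^{ν+e-1}+1), q^{2(ν+e-1)}+q^ν-q^{ν+e-1}-2, q^{ν+e-1}(q^{ν+e-1}+1)), and let N = c·I + d·A with c = ∏_{t=1}^{ν}(q^{t+e-1}+1) and d = ∏_{t=1}^{ν-1}(q^{t+e-1}+1). Then N has rank (q^ν - 1)(q^{ν-1+e} + 1) + 1 over the reals. -/
/-!
Writing `a = q^{ν+e-1}` and `b = q^ν`, the product for `c` exceeds the one for `d` by the factor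
`a + 1`, so `N = d • (A + (a + 1) • 1)` and `rank N = n - m`, where `m` is the multiplicity of the
eigenvalue `s = -(a + 1)` of `A`. The other restricted eigenvalue is `r = b - a - 1`, and since
`(A - k)(A - s)(A - r) = 0`, the matrix `(A - k)(A - r) / ((s - k)(s - r))` is a projection onto
the `s`-eigenspace. Its trace gives `m = n k (1 + r) / ((s - k)(s - r)) = (b - 1)(b - a)`, hence
`rank N = b² - (b - 1)(b - a) = (b - 1)(a + 1) + 1`.
-/

open Matrix Module

namespace Matrix

variable {K m n : Type*} [Field K] [Fintype n]

theorem rank_add_finrank_ker_mulVecLin (M : Matrix m n K) :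
    M.rank + finrank K (LinearMap.ker M.mulVecLin) = Fintype.card n := by
  rw [rank, LinearMap.finrank_range_add_finrank_ker, finrank_fintype_fun_eq_card]

variable [DecidableEq n]

/-- `D⁻¹ • P` is a projection onto `ker B`. -/
theorem finrank_ker_mulVecLin_eq_trace_div {B P W : Matrix n n K} {D : K} (hD : D ≠ 0)
    (hBP : B * P = 0) (hP : P = W * B + D • 1) :
    (finrank K (LinearMap.ker B.mulVecLin) : K) = P.trace / D := by
  have hproj : LinearMap.IsProj (LinearMap.ker B.mulVecLin) (D⁻¹ • P).mulVecLin := by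
    constructor
    · intro x
      simp [LinearMap.mem_ker, mulVec_mulVec, hBP]
    · intro x hx
      rw [LinearMap.mem_ker, mulVecLin_apply] at hx
      simp [hP, hx, hD]
  rw [← hproj.trace, ← toLin'_apply', trace_toLin'_eq, trace_smul, smul_eq_mul, inv_mul_eq_div]

theorem sub_smul_one_mul_sub_smul_one (A : Matrix n n K) (s r : K) :
    (A - s • 1) * (A - r • 1) = A * A - (s + r) • A + (s * r) • 1 := by
  simp only [sub_mul, mul_sub, Matrix.smul_mul, Matrix.mul_smul, one_mul, mul_one, smul_smul]
  module

end Matrix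

namespace SimpleGraph

variable {V K : Type*} [Fintype V] {G : SimpleGraph V} [DecidableRel G.Adj] [Field K]
  {n k ℓ μ : ℕ}

theorem IsRegularOfDegree.adjMatrix_mul_of_one (h : G.IsRegularOfDegree k) :
    G.adjMatrix K * of 1 = (k : K) • of 1 := by
  ext v w
  simp [adjMatrix_mul_apply, h v]

theorem IsSRGWith.trace_adjMatrix_mul_self (h : G.IsSRGWith n k ℓ μ) :
    (G.adjMatrix K * G.adjMatrix K).trace = n * k := by
  rw [Matrix.trace]
  simp only [diag_apply, adjMatrix_mul_self_apply_self, h.regular _]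
  simp [← h.card]

variable [DecidableEq V]

omit [Fintype V] in
theorem adjMatrix_compl_eq_of_one_sub_one_sub :
    Gᶜ.adjMatrix K = of 1 - 1 - G.adjMatrix K := by
  rw [← adjMatrix_completeGraph_eq_of_one_sub_one,
    ← IsCompl.adjMatrix_add_adjMatrix_eq_adjMatrix_completeGraph K (isCompl_compl (x := G))]
  abel

theorem IsSRGWith.adjMatrix_sub_smul_one_mul (h : G.IsSRGWith n k ℓ μ) {s r : K}
    (hsum : s + r = ℓ - μ) (hprod : s * r = μ - k) :
    (G.adjMatrix K - s • 1) * (G.adjMatrix K - r • 1) = (μ : K) • of 1 := by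
  have hsq := h.matrix_eq (α := K)
  rw [adjMatrix_compl_eq_of_one_sub_one_sub, sq] at hsq
  rw [sub_smul_one_mul_sub_smul_one, hsum, hprod, hsq]
  simp only [← Nat.cast_smul_eq_nsmul K]
  module

theorem IsSRGWith.finrank_ker_adjMatrix_sub_smul_one (h : G.IsSRGWith n k ℓ μ) {s r : K}
    (hsum : s + r = ℓ - μ) (hprod : s * r = μ - k) (hs : (s - k) * (s - r) ≠ 0) :
    (finrank K (LinearMap.ker (G.adjMatrix K - s • 1).mulVecLin) : K) =
      n * k * (1 + r) / ((s - k) * (s - r)) := by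
  set A := G.adjMatrix K
  have hcomm : (A - s • 1) * (A - (k : K) • 1) = (A - (k : K) • 1) * (A - s • 1) := by
    rw [sub_smul_one_mul_sub_smul_one, sub_smul_one_mul_sub_smul_one, add_comm s, mul_comm s]
  have hcubic : (A - s • 1) * ((A - (k : K) • 1) * (A - r • 1)) = 0 := by
    rw [← mul_assoc, hcomm, mul_assoc, h.adjMatrix_sub_smul_one_mul hsum hprod, Matrix.mul_smul,
      sub_mul, h.regular.adjMatrix_mul_of_one, Matrix.smul_mul, one_mul, sub_self, smul_zero]
  have hsplit : (A - (k : K) • 1) * (A - r • 1) =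
      (A - (k + r - s) • 1) * (A - s • 1) + ((s - k) * (s - r)) • 1 := by
    rw [sub_smul_one_mul_sub_smul_one, sub_smul_one_mul_sub_smul_one]
    module
  rw [finrank_ker_mulVecLin_eq_trace_div hs hcubic hsplit, sub_smul_one_mul_sub_smul_one,
    trace_add, trace_sub, trace_smul, trace_smul, h.trace_adjMatrix_mul_self, trace_adjMatrix,
    trace_one, h.card]
  simp only [smul_eq_mul]
  ring

theorem IsSRGWith.rank_adjMatrix_add_smul_one (h : G.IsSRGWith n k ℓ μ) {a b : K}
    (ha : a + 1 ≠ 0) (hb : b ≠ 0) (hn : (n : K) = b * b) (hk : (k : K) = (b - 1) * (a + 1))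
    (hℓ : (ℓ : K) = a * a + b - a - 2) (hμ : (μ : K) = a * (a + 1)) :
    ((G.adjMatrix K + (a + 1) • 1).rank : K) = (b - 1) * (a + 1) + 1 := by
  have hgap : (-(a + 1) - k) * (-(a + 1) - (b - a - 1)) = (a + 1) * (b * b) := by
    rw [hk]
    ring
  have hmult : (finrank K (LinearMap.ker (G.adjMatrix K - (-(a + 1)) • 1).mulVecLin) : K) =
      (b - 1) * (b - a) := by
    rw [h.finrank_ker_adjMatrix_sub_smul_one (r := b - a - 1) (by rw [hℓ, hμ]; ring)
      (by rw [hk, hμ]; ring) (by rw [hgap]; simp [ha, hb]), hgap, hn, hk]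
    field_simp
    ring
  have hrank := congrArg (Nat.cast (R := K))
    (G.adjMatrix K - (-(a + 1)) • 1).rank_add_finrank_ker_mulVecLin
  rw [Nat.cast_add, hmult, h.card, hn, neg_smul, sub_neg_eq_add] at hrank
  linear_combination hrank

end SimpleGraph

theorem stmt_2_general {X : Type*} [Fintype X] [DecidableEq X]
    (G : SimpleGraph X) [DecidableRel G.Adj]
    (q ν : ℕ) (hq : ∃ p n : ℕ, p.Prime ∧ q = p ^ n) (hν : 1 ≤ ν)
    (e : ℝ)
    (n k ℓ μ : ℕ)
    (hn : (n : ℝ) = (q : ℝ) ^ (2 * ν))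
    (hk : (k : ℝ) = ((q : ℝ) ^ (ν : ℝ) - 1) * ((q : ℝ) ^ ((ν : ℝ) + e - 1) + 1))
    (hℓ : (ℓ : ℝ) = (q : ℝ) ^ (2 * ((ν : ℝ) + e - 1)) + (q : ℝ) ^ (ν : ℝ)
        - (q : ℝ) ^ ((ν : ℝ) + e - 1) - 2)
    (hμ : (μ : ℝ) = (q : ℝ) ^ ((ν : ℝ) + e - 1) * ((q : ℝ) ^ ((ν : ℝ) + e - 1) + 1))
    (hsrg : G.IsSRGWith n k ℓ μ)
    (c d : ℝ)
    (hc : c = ∏ t ∈ Finset.Icc 1 ν, ((q : ℝ) ^ ((t : ℝ) + e - 1) + 1))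
    (hd : d = ∏ t ∈ Finset.Icc 1 (ν - 1), ((q : ℝ) ^ ((t : ℝ) + e - 1) + 1))
    (N : Matrix X X ℝ)
    (hN : N = c • (1 : Matrix X X ℝ) + d • G.adjMatrix ℝ) :
    (N.rank : ℝ) = ((q : ℝ) ^ (ν : ℝ) - 1) * ((q : ℝ) ^ ((ν : ℝ) - 1 + e) + 1) + 1 := by
  have hq0 : (0 : ℝ) < q := by
    obtain ⟨p, m, hp, rfl⟩ := hq
    exact_mod_cast pow_pos hp.pos m
  set a := (q : ℝ) ^ ((ν : ℝ) + e - 1)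
  set b := (q : ℝ) ^ (ν : ℝ)
  have hb : 0 < b := Real.rpow_pos_of_pos hq0 _
  have hn' : (n : ℝ) = b * b := by
    rw [hn, two_mul, pow_add, ← Real.rpow_natCast]
  have hℓ' : (ℓ : ℝ) = a * a + b - a - 2 := by
    rw [hℓ, ← Real.rpow_add hq0, ← two_mul]
  have hcd : c = d * (a + 1) := by
    rw [hc, hd, ← Nat.sub_add_cancel hν, Finset.prod_Icc_succ_top (by omega),
      Nat.sub_add_cancel hν]
  have hd0 : d ≠ 0 := by
    rw [hd]
    exact (Finset.prod_pos fun t _ => by positivity).ne'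
  have hNA : N = d • (G.adjMatrix ℝ + (a + 1) • 1) := by
    rw [hN, hcd]
    module
  rw [hNA, rank_smul_of_mem_nonZeroDivisors _ (mem_nonZeroDivisors_of_ne_zero hd0),
    hsrg.rank_adjMatrix_add_smul_one (by positivity) hb.ne' hn' hk hℓ' hμ,
    show (ν : ℝ) - 1 + e = ν + e - 1 by ring]

/-- If `A` is the adjacency matrix of a strongly regular graph with the stated
parameters and `N = c•I + d•A` with the stated products, then
`rank N = (q^ν - 1)(q^{ν-1+e} + 1) + 1`. -/
theorem stmt_2 {X : Type*} [Fintype X] [DecidableEq X]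
    (G : SimpleGraph X) [DecidableRel G.Adj]
    (q ν : ℕ) (hq : ∃ p n : ℕ, p.Prime ∧ q = p ^ n) (hν : 1 ≤ ν)
    (e : ℝ) (he : e = 0 ∨ e = 1/2)
    (n k ℓ μ : ℕ)
    (hn : (n : ℝ) = (q : ℝ) ^ (2 * ν))
    (hk : (k : ℝ) = ((q : ℝ) ^ (ν : ℝ) - 1) * ((q : ℝ) ^ ((ν : ℝ) + e - 1) + 1))
    (hℓ : (ℓ : ℝ) = (q : ℝ) ^ (2 * ((ν : ℝ) + e - 1)) + (q : ℝ) ^ (ν : ℝ)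
        - (q : ℝ) ^ ((ν : ℝ) + e - 1) - 2)
    (hμ : (μ : ℝ) = (q : ℝ) ^ ((ν : ℝ) + e - 1) * ((q : ℝ) ^ ((ν : ℝ) + e - 1) + 1))
    (hsrg : G.IsSRGWith n k ℓ μ)
    (c d : ℝ)
    (hc : c = ∏ t ∈ Finset.Icc 1 ν, ((q : ℝ) ^ ((t : ℝ) + e - 1) + 1))
    (hd : d = ∏ t ∈ Finset.Icc 1 (ν - 1), ((q : ℝ) ^ ((t : ℝ) + e - 1) + 1))
    (N : Matrix X X ℝ)
    (hN : N = c • (1 : Matrix X X ℝ) + d • G.adjMatrix ℝ) :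
    (N.rank : ℝ) = ((q : ℝ) ^ (ν : ℝ) - 1) * ((q : ℝ) ^ ((ν : ℝ) - 1 + e) + 1) + 1 :=
  stmt_2_general G q ν hq hν e n k ℓ μ hn hk hℓ hμ hsrg c d hc hd N hN
end

section
/- Any intersecting family ℱ of maximal totally isotropic flats in the classical affine space ACG(2ν, F_q) satisfies |ℱ| ≤ ∏_{i=1}^{ν}(q^{i+e-1}+1). -/
/-!
An intersecting family of flats contains at most one flat in each direction, since two
translates of the same subspace are equal as soon as they meet. Hence the family is no larger
than the set of directions, i.e. the set of maximal totally isotropic subspaces.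
-/

theorem AddSubgroup.image_add_right_eq_of_nonempty_inter {G : Type*} [AddCommGroup G]
    {H : AddSubgroup G} {x y : G}
    (h : ((· + x) '' (H : Set G) ∩ (· + y) '' (H : Set G)).Nonempty) :
    (· + x) '' (H : Set G) = (· + y) '' (H : Set G) := by
  simp only [Set.image_add_right] at h ⊢
  obtain ⟨z, hzx, hzy⟩ := h
  ext v
  have hv : v + -y = (v + -x) + ((z + -y) - (z + -x)) := by abel
  simp only [Set.mem_preimage, SetLike.mem_coe, hv]
  exact (H.add_mem_cancel_right (H.sub_mem hzy hzx)).symm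

theorem Submodule.natCard_le_of_pairwise_inter_translates {𝔽 V : Type*} [Ring 𝔽]
    [AddCommGroup V] [Module 𝔽 V] (ℳ : Set (Submodule 𝔽 V)) [Finite ℳ] (ℱ : Set (Set V))
    (hℱ : ℱ ⊆ {s | ∃ P ∈ ℳ, ∃ x, s = (· + x) '' (P : Set V)})
    (hint : ∀ F ∈ ℱ, ∀ F' ∈ ℱ, (F ∩ F').Nonempty) :
    Nat.card ℱ ≤ Nat.card ℳ := by
  choose P hP x hx using fun F : ℱ => hℱ F.2
  refine Nat.card_le_card_of_injective (fun F => ⟨P F, hP F⟩) fun F F' hFF' => Subtype.ext ?_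
  have hPP' : P F = P F' := congrArg Subtype.val hFF'
  have hne := hint F F.2 F' F'.2
  rw [hx F, hx F', hPP'] at hne ⊢
  exact AddSubgroup.image_add_right_eq_of_nonempty_inter (H := (P F').toAddSubgroup) hne

theorem stmt_8_general {𝔽 V : Type*} [Field 𝔽] [Fintype 𝔽] [AddCommGroup V] [Module 𝔽 V]
    [FiniteDimensional 𝔽 V] (q ν : ℕ) (e : ℝ)
    (ℳ : Set (Submodule 𝔽 V))
    (hM : (Nat.card ℳ : ℝ) = ∏ i ∈ Finset.Icc 1 ν, ((q : ℝ) ^ ((i : ℝ) + e - 1) + 1))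
    (𝒪 : Set (Set V))
    (h𝒪 : 𝒪 = {s | ∃ P ∈ ℳ, ∃ x, s = (· + x) '' (P : Set V)})
    (ℱ : Set (Set V)) (hℱ : ℱ ⊆ 𝒪)
    (hint : ∀ F ∈ ℱ, ∀ F' ∈ ℱ, (F ∩ F').Nonempty) :
    (Nat.card ℱ : ℝ) ≤ ∏ i ∈ Finset.Icc 1 ν, ((q : ℝ) ^ ((i : ℝ) + e - 1) + 1) := by
  have : Finite V := Module.finite_of_finite 𝔽
  rw [← hM]
  exact_mod_cast Submodule.natCard_le_of_pairwise_inter_translates ℳ ℱ (h𝒪 ▸ hℱ) hint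

/-- Any intersecting family `ℱ` of maximal totally isotropic flats in the classical
affine space `ACG(2ν, F_q)` satisfies `|ℱ| ≤ ∏_{i=1}^{ν} (q^{i+e-1} + 1)`. -/
theorem stmt_8 {𝔽 V : Type*} [Field 𝔽] [Fintype 𝔽] [AddCommGroup V] [Module 𝔽 V]
    [FiniteDimensional 𝔽 V] (q ν : ℕ) (e : ℝ)
    (he : e = 1 ∨ e = 1/2 ∨ e = 0)
    (hq : Fintype.card 𝔽 = q) (hV : Module.finrank 𝔽 V = 2 * ν) (hν : 1 ≤ ν)
    (ℳ : Set (Submodule 𝔽 V))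
    (hdim : ∀ P ∈ ℳ, Module.finrank 𝔽 P = ν)
    (hM : (Nat.card ℳ : ℝ) = ∏ i ∈ Finset.Icc 1 ν, ((q : ℝ) ^ ((i : ℝ) + e - 1) + 1))
    (𝒪 : Set (Set V))
    (h𝒪 : 𝒪 = {s | ∃ P ∈ ℳ, ∃ x, s = (· + x) '' (P : Set V)})
    (ℱ : Set (Set V)) (hℱ : ℱ ⊆ 𝒪)
    (hint : ∀ F ∈ ℱ, ∀ F' ∈ ℱ, (F ∩ F').Nonempty) :
    (Nat.card ℱ : ℝ) ≤ ∏ i ∈ Finset.Icc 1 ν, ((q : ℝ) ^ ((i : ℝ) + e - 1) + 1) :=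
  stmt_8_general q ν e ℳ hM 𝒪 h𝒪 ℱ hℱ hint
end

section
/- In the maximal totally isotropic flat scheme 𝔛(𝒪_ν), the valencies are v_{(i,0)} = q^{i(i+2e+1)/2} · [ν choose i]_q and v_{(i,1)} = (q^{ν-i}-1) · q^{i(i+2e+1)/2} · [ν choose i]_q, where [ν choose i]_q is the Gaussian binomial coefficient. -/
/-- Gaussian binomial coefficient `[n choose k]_q` (real base). -/
noncomputable def gaussBinomR (q : ℝ) (n k : ℕ) : ℝ :=
  ∏ j ∈ Finset.range k, (q ^ (n - k + j + 1) - 1) / (q ^ (j + 1) - 1)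

/-!
The cosets of `Q` are the fibres of `V → V ⧸ Q`, and the coset over `c` meets `P + x` exactly
when `c - [x]` lies in the image of `P`, a space of dimension `dim P - dim (P ⊓ Q) = i`. So each
admissible `Q` has `q ^ i` cosets meeting `P + x` and `q ^ ν - q ^ i` cosets missing it, and the
valencies are the number of admissible `Q` times these counts.
-/

theorem Set.natCard_setOf_mem_and_mem_eq_mul {α β : Type*} {S : Set α} (hS : S.Finite)
    (t : α → Set β) [∀ a, Finite (t a)] {c : ℕ} (ht : ∀ a ∈ S, Nat.card (t a) = c) :
    Nat.card {p : α × β | p.1 ∈ S ∧ p.2 ∈ t p.1} = Nat.card S * c := by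
  have := hS.fintype
  calc Nat.card {p : α × β | p.1 ∈ S ∧ p.2 ∈ t p.1}
      = Nat.card (Σ a : S, t a) :=
        Nat.card_congr
          { toFun := fun p => ⟨⟨p.1.1, p.2.1⟩, ⟨p.1.2, p.2.2⟩⟩
            invFun := fun p => ⟨(p.1.1, p.2.1), p.1.2, p.2.2⟩ }
    _ = Nat.card S * c := by
      rw [Nat.card_sigma, Finset.sum_congr rfl fun a _ => ht a.1 a.2, Finset.sum_const,
        smul_eq_mul, Finset.card_univ, Nat.card_eq_fintype_card]

theorem natCard_setOf_sub_mem {G : Type*} [AddGroup G] (S : Set G) (a : G) :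
    Nat.card {c : G | c - a ∈ S} = Nat.card S :=
  Nat.card_congr ((Equiv.subRight a).subtypeEquiv fun _ => Iff.rfl)

namespace Submodule

section Cosets

variable {R V : Type*} [Ring R] [AddCommGroup V] [Module R V]

theorem image_add_eq_preimage_mk (Q : Submodule R V) (y : V) :
    (· + y) '' (Q : Set V) = Quotient.mk ⁻¹' {(Quotient.mk y : V ⧸ Q)} := by
  ext v
  simp only [Set.mem_image, SetLike.mem_coe, Set.mem_preimage, Set.mem_singleton_iff,
    Quotient.eq]
  exact ⟨fun ⟨a, ha, hv⟩ => hv ▸ by simpa using ha, fun hv => ⟨v - y, hv, sub_add_cancel v y⟩⟩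

theorem natCard_setOf_exists_eq_image_add_and (Q : Submodule R V) (p : Set V → Prop) :
    Nat.card {s : Set V | (∃ y, s = (· + y) '' (Q : Set V)) ∧ p s}
      = Nat.card {c : V ⧸ Q | p (Quotient.mk ⁻¹' {c})} := by
  have hinj : Function.Injective fun c : V ⧸ Q => (Quotient.mk ⁻¹' {c} : Set V) :=
    (Quotient.mk_surjective Q).preimage_injective.comp Set.singleton_injective
  rw [← Nat.card_image_of_injective hinj]
  congr
  ext s
  constructor
  · rintro ⟨⟨y, rfl⟩, hs⟩
    exact ⟨Quotient.mk y, by rwa [Set.mem_ofPred_eq, ← image_add_eq_preimage_mk],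
      (image_add_eq_preimage_mk Q y).symm⟩
  · rintro ⟨c, hc, rfl⟩
    obtain ⟨y, rfl⟩ := Quotient.mk_surjective Q c
    exact ⟨⟨y, (image_add_eq_preimage_mk Q y).symm⟩, hc⟩

theorem image_add_inter_preimage_mk_nonempty_iff (P Q : Submodule R V) (x : V) (c : V ⧸ Q) :
    ((· + x) '' (P : Set V) ∩ Quotient.mk ⁻¹' {c}).Nonempty ↔ c - Quotient.mk x ∈ P.map Q.mkQ := by
  constructor
  · rintro ⟨_, ⟨p, hp, rfl⟩, rfl⟩
    exact ⟨p, hp, by simp⟩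
  · rintro ⟨p, hp, hpc⟩
    refine ⟨p + x, ⟨p, hp, rfl⟩, ?_⟩
    rw [mkQ_apply] at hpc
    simp [hpc]

theorem natCard_cosets_meeting (P Q : Submodule R V) (x : V) :
    Nat.card {s : Set V | (∃ y, s = (· + y) '' (Q : Set V)) ∧
        ((· + x) '' (P : Set V) ∩ s).Nonempty} = Nat.card (P.map Q.mkQ) := by
  simp only [natCard_setOf_exists_eq_image_add_and, image_add_inter_preimage_mk_nonempty_iff]
  exact natCard_setOf_sub_mem _ _

theorem natCard_cosets_not_meeting [Finite V] (P Q : Submodule R V) (x : V) :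
    Nat.card {s : Set V | (∃ y, s = (· + y) '' (Q : Set V)) ∧
        ¬ ((· + x) '' (P : Set V) ∩ s).Nonempty}
      = Nat.card (V ⧸ Q) - Nat.card (P.map Q.mkQ) := by
  simp only [natCard_setOf_exists_eq_image_add_and, image_add_inter_preimage_mk_nonempty_iff]
  have : Finite (V ⧸ Q) := .of_surjective _ (Quotient.mk_surjective Q)
  have h := Set.ncard_add_ncard_compl {c : V ⧸ Q | c - Quotient.mk x ∈ P.map Q.mkQ}
  have hW : Nat.card {c : V ⧸ Q | c - Quotient.mk x ∈ P.map Q.mkQ} = Nat.card (P.map Q.mkQ) :=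
    natCard_setOf_sub_mem _ _
  rw [← Nat.card_coe_set_eq, ← Nat.card_coe_set_eq, hW] at h
  exact Nat.eq_sub_of_add_eq' h

end Cosets

theorem finrank_map_add_finrank_inf_ker {K V W : Type*} [DivisionRing K] [AddCommGroup V]
    [Module K V] [AddCommGroup W] [Module K W] (f : V →ₗ[K] W) (P : Submodule K V)
    [FiniteDimensional K P] :
    Module.finrank K (P.map f) + Module.finrank K (P ⊓ LinearMap.ker f : Submodule K V)
      = Module.finrank K P := by
  have h := LinearMap.finrank_range_add_finrank_ker (f ∘ₗ P.subtype)
  rwa [LinearMap.range_comp, range_subtype, LinearMap.ker_comp,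
    (equivSubtypeMap P _).finrank_eq, map_comap_subtype] at h

theorem natCard_map_mkQ {K V : Type*} [DivisionRing K] [AddCommGroup V] [Module K V]
    [FiniteDimensional K V] (P Q : Submodule K V) :
    Nat.card (P.map Q.mkQ)
      = Nat.card K ^ (Module.finrank K P - Module.finrank K (P ⊓ Q : Submodule K V)) := by
  have h := finrank_map_add_finrank_inf_ker Q.mkQ P
  rw [ker_mkQ] at h
  rw [Module.natCard_eq_pow_finrank (K := K), ← h, Nat.add_sub_cancel]

end Submodule

theorem stmt_13_general {𝔽 V : Type*} [Field 𝔽] [Fintype 𝔽] [AddCommGroup V] [Module 𝔽 V]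
    [Fintype V] (q ν i : ℕ) (e : ℝ)
    (hq : Fintype.card 𝔽 = q) (hV : Module.finrank 𝔽 V = 2 * ν) (hi : i ≤ ν)
    (ℳ : Set (Submodule 𝔽 V))
    (hdim : ∀ P ∈ ℳ, Module.finrank 𝔽 P = ν)
    (P : Submodule 𝔽 V) (hP : P ∈ ℳ) (x : V)
    (hcount : (Nat.card {Q : Submodule 𝔽 V | Q ∈ ℳ ∧
        Module.finrank 𝔽 (P ⊓ Q : Submodule 𝔽 V) = ν - i} : ℝ)
      = (q : ℝ) ^ ((i : ℝ) * ((i : ℝ) + 2 * e - 1) / 2) * gaussBinomR q ν i) :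
    (Nat.card {T : Submodule 𝔽 V × Set V | T.1 ∈ ℳ ∧
        Module.finrank 𝔽 (P ⊓ T.1 : Submodule 𝔽 V) = ν - i ∧
        (∃ y, T.2 = (· + y) '' (T.1 : Set V)) ∧
        ((((· + x) '' (P : Set V))) ∩ T.2).Nonempty} : ℝ)
      = (q : ℝ) ^ ((i : ℝ) * ((i : ℝ) + 2 * e + 1) / 2) * gaussBinomR q ν i ∧
    (Nat.card {T : Submodule 𝔽 V × Set V | T.1 ∈ ℳ ∧
        Module.finrank 𝔽 (P ⊓ T.1 : Submodule 𝔽 V) = ν - i ∧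
        (∃ y, T.2 = (· + y) '' (T.1 : Set V)) ∧
        ¬ ((((· + x) '' (P : Set V))) ∩ T.2).Nonempty} : ℝ)
      = ((q : ℝ) ^ (ν - i) - 1) *
          ((q : ℝ) ^ ((i : ℝ) * ((i : ℝ) + 2 * e + 1) / 2) * gaussBinomR q ν i) := by
  set S := {Q : Submodule 𝔽 V | Q ∈ ℳ ∧ Module.finrank 𝔽 (P ⊓ Q : Submodule 𝔽 V) = ν - i}
  rw [← Nat.card_eq_fintype_card] at hq
  have hq0 : 0 < q := hq ▸ Nat.card_pos
  have hmeet (Q : Submodule 𝔽 V) (hQ : Q ∈ S) : Nat.card (P.map Q.mkQ) = q ^ i := by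
    rw [Submodule.natCard_map_mkQ, hq, hQ.2, hdim P hP, Nat.sub_sub_self hi]
  have hall (Q : Submodule 𝔽 V) (hQ : Q ∈ S) : Nat.card (V ⧸ Q) = q ^ ν := by
    rw [Module.natCard_eq_pow_finrank (K := 𝔽), hq, Submodule.finrank_quotient, hV, hdim Q hQ.1]
    congr 1
    omega
  have hvalency : (Nat.card S : ℝ) * (q : ℝ) ^ i
      = (q : ℝ) ^ ((i : ℝ) * ((i : ℝ) + 2 * e + 1) / 2) * gaussBinomR q ν i := by
    rw [hcount, mul_assoc, mul_comm (gaussBinomR _ _ _), ← mul_assoc, ← Real.rpow_natCast,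
      ← Real.rpow_add (by exact_mod_cast hq0)]
    ring_nf
  have hpairs (N : Set V → Prop) (c : ℕ)
      (hc : ∀ Q ∈ S, Nat.card {s : Set V | (∃ y, s = (· + y) '' (Q : Set V)) ∧ N s} = c) :
      Nat.card {T : Submodule 𝔽 V × Set V | T.1 ∈ ℳ ∧
        Module.finrank 𝔽 (P ⊓ T.1 : Submodule 𝔽 V) = ν - i ∧
        (∃ y, T.2 = (· + y) '' (T.1 : Set V)) ∧ N T.2} = Nat.card S * c :=
    (Nat.card_congr (Equiv.setCongr (Set.ext fun _ => and_assoc.symm))).trans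
      (Set.natCard_setOf_mem_and_mem_eq_mul S.toFinite _ hc)
  constructor
  · rw [hpairs _ (q ^ i) fun Q hQ => (Submodule.natCard_cosets_meeting P Q x).trans (hmeet Q hQ)]
    push_cast
    exact hvalency
  · rw [hpairs (fun s => ¬ ((· + x) '' (P : Set V) ∩ s).Nonempty) (q ^ ν - q ^ i) fun Q hQ => by
      rw [Submodule.natCard_cosets_not_meeting, hall Q hQ, hmeet Q hQ]]
    have hsplit : q ^ ν - q ^ i = (q ^ (ν - i) - 1) * q ^ i := by
      rw [Nat.sub_one_mul, ← pow_add, Nat.sub_add_cancel hi]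
    have hq1 : 1 ≤ q ^ (ν - i) := Nat.one_le_pow _ _ hq0
    rw [hsplit, ← hvalency]
    push_cast [hq1]
    ring

/-- Valencies of the maximal totally isotropic flat scheme: for a fixed maximal
totally isotropic flat `F = P + x`, the number of flats `Q + y` meeting `F` with
`dim(P ∩ Q) = ν - i` is `q^{i(i+2e+1)/2}·[ν choose i]_q`, and the number of those
disjoint from `F` is `(q^{ν-i} - 1)·q^{i(i+2e+1)/2}·[ν choose i]_q`. -/
theorem stmt_13 {𝔽 V : Type*} [Field 𝔽] [Fintype 𝔽] [AddCommGroup V] [Module 𝔽 V]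
    [Fintype V] (q ν i : ℕ) (e : ℝ)
    (he : e = 1 ∨ e = 1/2 ∨ e = 0)
    (hq : Fintype.card 𝔽 = q) (hV : Module.finrank 𝔽 V = 2 * ν) (hi : i ≤ ν)
    (ℳ : Set (Submodule 𝔽 V))
    (hdim : ∀ P ∈ ℳ, Module.finrank 𝔽 P = ν)
    (P : Submodule 𝔽 V) (hP : P ∈ ℳ) (x : V)
    (hcount : (Nat.card {Q : Submodule 𝔽 V | Q ∈ ℳ ∧
        Module.finrank 𝔽 (P ⊓ Q : Submodule 𝔽 V) = ν - i} : ℝ)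
      = (q : ℝ) ^ ((i : ℝ) * ((i : ℝ) + 2 * e - 1) / 2) * gaussBinomR q ν i) :
    (Nat.card {T : Submodule 𝔽 V × Set V | T.1 ∈ ℳ ∧
        Module.finrank 𝔽 (P ⊓ T.1 : Submodule 𝔽 V) = ν - i ∧
        (∃ y, T.2 = (· + y) '' (T.1 : Set V)) ∧
        ((((· + x) '' (P : Set V))) ∩ T.2).Nonempty} : ℝ)
      = (q : ℝ) ^ ((i : ℝ) * ((i : ℝ) + 2 * e + 1) / 2) * gaussBinomR q ν i ∧
    (Nat.card {T : Submodule 𝔽 V × Set V | T.1 ∈ ℳ ∧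
        Module.finrank 𝔽 (P ⊓ T.1 : Submodule 𝔽 V) = ν - i ∧
        (∃ y, T.2 = (· + y) '' (T.1 : Set V)) ∧
        ¬ ((((· + x) '' (P : Set V))) ∩ T.2).Nonempty} : ℝ)
      = ((q : ℝ) ^ (ν - i) - 1) *
          ((q : ℝ) ^ ((i : ℝ) * ((i : ℝ) + 2 * e + 1) / 2) * gaussBinomR q ν i) :=
  stmt_13_general q ν i e hq hV hi ℳ hdim P hP x hcount
end
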